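/- arXiv:2301.12556 — 3 statements merged into one kernel-verified Lean document; each statement's English description precedes it below -/
import Mathlib

section
/- Appending a character in constant time: for every finite alphabet Σ and every character a ∈ Σ there is a closed λ-term append_{Σ,a} of Λ_det such that for every value k and every string s ∈ Σ*, append_{Σ,a} k ⟨s⟩ →det² k ⟨a·s⟩ (exactly two →det-steps, independently of s and k). -/
namespace LogTM

/-- Untyped λ-terms with de Bruijn indices. -/
inductive Lam : Type
  | var : ℕ → Lam
  | lam : Lam → Lam
  | app : Lam → Lam → Lam

namespace Lam

/-- Values: variables and abstractions. -/
def IsValue : Lam → Prop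
  | var _ => True
  | lam _ => True
  | app _ _ => False

/-- Terms of the deterministic λ-calculus `Λ_det`:
    the argument of every application is a value. -/
def InDet : Lam → Prop
  | var _ => True
  | lam t => InDet t
  | app t u => InDet t ∧ InDet u ∧ IsValue u

/-- Shift the free variables `≥ d` by one. -/
def lift : ℕ → Lam → Lam
  | d, var n => if n < d then var n else var (n + 1)
  | d, lam t => lam (lift (d + 1) t)
  | d, app t u => app (lift d t) (lift d u)

/-- Capture-avoiding substitution `t[k := u]`. -/
def subst : Lam → ℕ → Lam → Lam
  | var n, k, u => if n < k then var n else if n = k then u else var (n - 1)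
  | lam t, k, u => lam (subst t (k + 1) (lift 0 u))
  | app t s, k, u => app (subst t k u) (subst s k u)

/-- Weak evaluation `→det` of the deterministic λ-calculus: β at the root,
    closed under evaluation contexts `E ::= ⟨·⟩ | E v`. -/
inductive Step : Lam → Lam → Prop
  | beta {t v : Lam} : IsValue v → Step (app (lam t) v) (subst t 0 v)
  | appL {t t' v : Lam} : IsValue v → Step t t' → Step (app t v) (app t' v)

/-- `n`-fold iteration of `→det`. -/
inductive StepN : ℕ → Lam → Lam → Prop
  | refl (t : Lam) : StepN 0 t t
  | head {n : ℕ} {t u r : Lam} : Step t u → StepN n u r → StepN (n + 1) t r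

/-- All free variables are `< d`. -/
def ClosedUnder : ℕ → Lam → Prop
  | d, var n => n < d
  | d, lam t => ClosedUnder (d + 1) t
  | d, app t u => ClosedUnder d t ∧ ClosedUnder d u

/-- Closed terms. -/
def Closed (t : Lam) : Prop := ClosedUnder 0 t

end Lam

/-- `n` nested abstractions. -/
def iterLam : ℕ → Lam → Lam
  | 0, t => t
  | n + 1, t => .lam (iterLam n t)

/-- Left-nested applications. -/
def mkApps : Lam → List Lam → Lam
  | t, [] => t
  | t, u :: us => mkApps (.app t u) us

/-- Scott encoding of the character `a` of a `k`-letter (ordered) alphabet: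
    `⟨a_i⟩ = λx_1…λx_k.x_i`. -/
def encChar (k : ℕ) (a : Fin k) : Lam := iterLam k (.var (k - 1 - (a : ℕ)))

/-- Scott encoding of strings over a `k`-letter (ordered) alphabet:
    `⟨ε⟩ = λx_1…λx_k.λx_ε.x_ε` and `⟨a_i·r⟩ = λx_1…λx_k.λx_ε.x_i ⟨r⟩`. -/
def encStr (k : ℕ) : List (Fin k) → Lam
  | [] => iterLam (k + 1) (.var 0)
  | a :: r => iterLam (k + 1) (.app (.var (k - (a : ℕ))) (encStr k r))

/-- Scott encoding of binary strings (alphabet `{0,1}`, `false = 0 < 1 = true`). -/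
def encBits : List Bool → Lam
  | [] => .lam (.lam (.lam (.var 0)))
  | false :: s => .lam (.lam (.lam (.app (.var 2) (encBits s))))
  | true :: s => .lam (.lam (.lam (.app (.var 1) (encBits s))))

/-- Successor on reversed binary strings. -/
def rsucc : List Bool → List Bool
  | [] => [true]
  | false :: s => true :: s
  | true :: s => false :: rsucc s

/-- Predecessor on (nonempty) reversed binary strings. -/
def rpred : List Bool → List Bool
  | [] => []
  | false :: s => true :: rpred s
  | [true] => []
  | true :: b :: s => false :: b :: s

/-- Lookup of the `(n+1)`-th character of a string using a reversed-binary counter. -/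
def rlookup {α : Type*} : List Bool → List α → Option α
  | _, [] => none
  | [], c :: _ => some c
  | b :: nb, _ :: s => rlookup (rpred (b :: nb)) s

/-- Input alphabet `B_I = {0, 1, L, R}`. -/
inductive BI : Type
  | b0 | b1 | bL | bR

/-- Work alphabet `B_W = {0, 1, □}`. -/
inductive BW : Type
  | w0 | w1 | wB

/-- Input head moves `{-1, +1, 0}`. -/
inductive IDir : Type
  | minus | plus | zero

/-- Work head moves `{←, →, ↓}`. -/
inductive WDir : Type
  | left | right | stay

/-- A deterministic binary Turing machine with input: states `Fin Q`, initial state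
    `qin`, final states `qT` and `qF`, and a partial transition function `δ` that is
    undefined on the final states. -/
structure TM where
  Q : ℕ
  qin : Fin Q
  qT : Fin Q
  qF : Fin Q
  δ : BI → BW → Fin Q → Option (IDir × BW × WDir × Fin Q)
  δ_final : ∀ b a s, (s = qT ∨ s = qF) → δ b a s = none

/-- A configuration `(i, n | w_l, a, w_r | s)`: read-only input `i`, input-head
    position `n`, work tape `w_l, a, w_r` (head on `a`), current state `s`. -/
structure Config (M : TM) where
  input : List BI
  pos : ℕ
  left : List BW
  head : BW
  right : List BW
  state : Fin M.Q

/-- Final configurations: the state is `qT` or `qF`. -/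
def Config.Final {M : TM} (C : Config M) : Prop := C.state = M.qT ∨ C.state = M.qF

/-- One machine transition, as a partial function (the relation `C →M D` is
    `M.step C = some D`). -/
def TM.step (M : TM) (C : Config M) : Option (Config M) :=
  match C.input[C.pos]? with
  | none => none
  | some b =>
    match M.δ b C.head C.state with
    | none => none
    | some (d, a', mv, s') =>
      let pos' : ℕ :=
        match d with
        | .minus => C.pos - 1
        | .plus => C.pos + 1
        | .zero => C.pos
      let w : List BW × BW × List BW :=
        match mv with
        | .stay => (C.left, a', C.right)
        | .left =>
          match C.left.getLast? with
          | none => ([], BW.wB, a' :: C.right)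
          | some a'' => (C.left.dropLast, a'', a' :: C.right)
        | .right =>
          match C.right with
          | [] => (C.left ++ [a'], BW.wB, [])
          | a'' :: r => (C.left ++ [a'], a'', r)
      some ⟨C.input, pos', w.1, w.2.1, w.2.2, s'⟩

/-- `n` machine transitions. -/
def TM.multiStep (M : TM) : ℕ → Config M → Option (Config M)
  | 0, C => some C
  | n + 1, C => (M.step C).bind (M.multiStep n)

/-- The fixed ordering `0 < 1 < L < R` of `B_I`. -/
def BI.toFin : BI → Fin 4
  | b0 => 0
  | b1 => 1
  | bL => 2
  | bR => 3

/-- The fixed ordering `0 < 1 < □` of `B_W`. -/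
def BW.toFin : BW → Fin 3
  | w0 => 0
  | w1 => 1
  | wB => 2

/-- Encoding of configurations:
    `⟨C⟩ = λx.(x ⟨i⟩ ⟨n̂⟩ ⟨w_l^R⟩ ⟨a⟩ ⟨w_r⟩ ⟨s⟩)`. -/
def encConfig {M : TM} (C : Config M) : Lam :=
  .lam (mkApps (.var 0)
    [encStr 4 (C.input.map BI.toFin),
     encBits (Nat.bits C.pos),
     encStr 3 (C.left.reverse.map BW.toFin),
     encChar 3 C.head.toFin,
     encStr 3 (C.right.map BW.toFin),
     encChar M.Q C.state])

/-- A bit as an input character. -/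
def bitToBI (b : Bool) : BI := if b then .b1 else .b0

/-- The initial configuration on binary input `i`: input tape `L·i·R`,
    input head at position `0`, empty work tape, initial state. -/
def initConfig (M : TM) (i : List Bool) : Config M :=
  ⟨BI.bL :: (i.map bitToBI) ++ [BI.bR], 0, [], BW.wB, [], M.qin⟩

/-- Scott-encoded booleans: `⟨true⟩ = λx.λy.x`, `⟨false⟩ = λx.λy.y`. -/
def encBool : Bool → Lam
  | true => .lam (.lam (.var 1))
  | false => .lam (.lam (.var 0))

/-!
The term is `λk.λs. k ⟨a·s⟩`. Because `⟨a·s⟩ = λx_1…λx_n.λx_ε. x_a ⟨s⟩` is an abstraction,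
it arises from the fixed body `λx_1…λx_n.λx_ε. x_a s` by substituting `⟨s⟩` for `s`, so the
two β-steps that consume `k` and `⟨s⟩` already produce `k ⟨a·s⟩`.
-/

namespace Lam

theorem closedUnder_mono : ∀ (t : Lam) {d d' : ℕ}, d ≤ d' →
    ClosedUnder d t → ClosedUnder d' t
  | var _, _, _, h, hc => lt_of_lt_of_le hc h
  | lam t, _, _, h, hc => closedUnder_mono t (Nat.succ_le_succ h) hc
  | app t u, _, _, h, hc => ⟨closedUnder_mono t h hc.1, closedUnder_mono u h hc.2⟩

theorem lift_of_closedUnder : ∀ (t : Lam) {d : ℕ}, ClosedUnder d t → lift d t = t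
  | var n, d, hc => if_pos hc
  | lam t, d, hc => congrArg lam (lift_of_closedUnder t hc)
  | app t u, d, hc => by
      rw [lift, lift_of_closedUnder t hc.1, lift_of_closedUnder u hc.2]

theorem subst_of_closedUnder : ∀ (t : Lam) {d : ℕ} (u : Lam),
    ClosedUnder d t → subst t d u = t
  | var n, d, u, hc => if_pos hc
  | lam t, d, u, hc => congrArg lam (subst_of_closedUnder t _ hc)
  | app t s, d, u, hc => by
      rw [subst, subst_of_closedUnder t _ hc.1, subst_of_closedUnder s _ hc.2]

theorem subst_lift : ∀ (t : Lam) (d : ℕ) (u : Lam), subst (lift d t) d u = t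
  | var n, d, u => by
      by_cases h : n < d
      · simp [lift, subst, h]
      · have h1 : ¬ (n + 1 < d) := by omega
        have h2 : n + 1 ≠ d := by omega
        simp [lift, subst, h, h1, h2]
  | lam t, d, u => by simp [lift, subst, subst_lift t]
  | app t s, d, u => by simp [lift, subst, subst_lift t, subst_lift s]

theorem StepN.app_app_lam_lam {t v w : Lam} (hv : v.IsValue) (hw : w.IsValue) :
    StepN 2 (app (app (lam (lam t)) v) w) (subst (subst t 1 (lift 0 v)) 0 w) :=
  .head (.appL hw (.beta hv)) (.head (.beta hw) (.refl _))

end Lam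

open Lam

theorem closedUnder_iterLam : ∀ (n : ℕ) (t : Lam) (d : ℕ),
    ClosedUnder d (iterLam n t) ↔ ClosedUnder (n + d) t
  | 0, t, d => by rw [Nat.zero_add]; rfl
  | n + 1, t, d => by
      rw [show n + 1 + d = n + (d + 1) by omega]
      exact closedUnder_iterLam n t (d + 1)

theorem inDet_iterLam : ∀ (n : ℕ) (t : Lam), InDet (iterLam n t) ↔ InDet t
  | 0, _ => Iff.rfl
  | n + 1, t => inDet_iterLam n t

theorem subst_iterLam_of_closed {u : Lam} (hu : u.Closed) :
    ∀ (n : ℕ) (t : Lam) (d : ℕ), subst (iterLam n t) d u = iterLam n (subst t (d + n) u)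
  | 0, t, d => rfl
  | n + 1, t, d => by
      show lam (subst (iterLam n t) (d + 1) (lift 0 u)) = _
      rw [lift_of_closedUnder u hu, subst_iterLam_of_closed hu n t (d + 1), Nat.add_right_comm]
      rfl

theorem encStr_isValue (k : ℕ) (s : List (Fin k)) : (encStr k s).IsValue := by
  cases s <;> trivial

theorem encStr_closed (k : ℕ) : ∀ s : List (Fin k), (encStr k s).Closed
  | [] => (closedUnder_iterLam _ _ _).2 (Nat.succ_pos _)
  | a :: r => (closedUnder_iterLam _ _ _).2
      ⟨show k - a < k + 1 + 0 by omega, closedUnder_mono _ (Nat.zero_le _) (encStr_closed k r)⟩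

/-- The encoding `⟨a·x⟩` with the tail `x` left as the free variable `0`. -/
def consPattern (k : ℕ) (a : Fin k) : Lam :=
  iterLam (k + 1) (.app (.var (k - a)) (.var (k + 1)))

theorem closedUnder_consPattern (k : ℕ) (a : Fin k) : ClosedUnder 1 (consPattern k a) :=
  (closedUnder_iterLam _ _ _).2 ⟨by simp only [ClosedUnder]; omega, by simp only [ClosedUnder]; omega⟩

theorem inDet_consPattern (k : ℕ) (a : Fin k) : InDet (consPattern k a) :=
  (inDet_iterLam _ _).2 ⟨trivial, trivial, trivial⟩

theorem subst_consPattern (k : ℕ) (a : Fin k) (s : List (Fin k)) :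
    subst (consPattern k a) 0 (encStr k s) = encStr k (a :: s) := by
  rw [consPattern, subst_iterLam_of_closed (encStr_closed k s)]
  simp only [subst, encStr]
  rw [if_pos (by omega), if_neg (by omega), if_pos (by omega)]

def appendTerm (k : ℕ) (a : Fin k) : Lam :=
  .lam (.lam (.app (.var 1) (consPattern k a)))

theorem appendTerm_closed (k : ℕ) (a : Fin k) : (appendTerm k a).Closed :=
  ⟨Nat.one_lt_two, closedUnder_mono _ (by norm_num) (closedUnder_consPattern k a)⟩

theorem appendTerm_inDet (k : ℕ) (a : Fin k) : (appendTerm k a).InDet :=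
  ⟨trivial, inDet_consPattern k a, trivial⟩

/-- appending a character in constant time: for every finite alphabet
    (of size `k`) and character `a`, there is a closed term `append` of `Λ_det` such
    that for every value `k` and string `s`, `append ⌜k⌝ ⟨s⟩ →det² ⌜k⌝ ⟨a·s⟩`
    (exactly two steps, independently of `s` and the continuation). -/
theorem append_char (k : ℕ) (a : Fin k) :
    ∃ appendTm : Lam, appendTm.Closed ∧ appendTm.InDet ∧
      ∀ kont : Lam, kont.IsValue → kont.InDet → ∀ s : List (Fin k),
        Lam.StepN 2 (.app (.app appendTm kont) (encStr k s))
          (.app kont (encStr k (a :: s))) := by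
  refine ⟨appendTerm k a, appendTerm_closed k a, appendTerm_inDet k a, fun kont hkont _ s => ?_⟩
  have hresult : subst (subst (.app (.var 1) (consPattern k a)) 1 (lift 0 kont)) 0 (encStr k s)
      = .app kont (encStr k (a :: s)) := by
    simp only [subst, lt_irrefl, if_false, if_true,
      subst_of_closedUnder _ _ (closedUnder_consPattern k a), subst_lift, subst_consPattern]
  exact hresult ▸ StepN.app_app_lam_lam hkont (encStr_isValue k s)

end LogTM
end

section
/- There is a closed λ-term lookup_λ of Λ_det and a constant c such that for every value k, every natural number n, and every nonempty string i over a finite alphabet with n < |i|, lookup_λ k ⟨n̂⟩ ⟨i⟩ →det^m k ⟨a⟩, where a is the (n+1)-th character of i and m ≤ c·(n+1)·(log₂(n+1)+1), i.e. the lookup of the (n+1)-th character via a binary counter takes O(n log n) →det-steps. -/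
namespace LogTM

/-!
The lookup term walks down the Scott-encoded string and decrements the reversed-binary
counter once per character, returning the current character when the counter reaches `⟨ε⟩`.
The decrement is a continuation-passing predecessor term that recurses only through the
low-order zero bits, hence costs `O(log m)` steps on `m̂`; everything else costs `O(K)` steps per
character, so `n` decrements and `n + 1` character dispatches cost `O(n log n)`.
Both terms recurse by self-application.
-/

namespace Lam

def shift (c m : ℕ) : Lam → Lam
  | var n => if n < c then var n else var (n + m)
  | lam t => lam (shift (c + 1) m t)
  | app t u => app (shift c m t) (shift c m u)

@[simp] theorem shift_zero (c : ℕ) (t : Lam) : shift c 0 t = t := by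
  induction t generalizing c <;> simp_all [shift]

theorem lift_eq_shift (c : ℕ) (t : Lam) : lift c t = shift c 1 t := by
  induction t generalizing c <;> simp_all [shift, lift]

theorem shift_shift (c m j : ℕ) (t : Lam) : shift c m (shift c j t) = shift c (j + m) t := by
  induction t generalizing c with
  | var n =>
    by_cases h : n < c
    · simp [shift, h]
    · simp only [shift, if_neg h, if_neg (show ¬ n + j < c by omega), Nat.add_assoc]
  | lam t ih => simp [shift, ih]
  | app t u iht ihu => simp [shift, iht, ihu]

theorem ClosedUnder.mono {t : Lam} {d e : ℕ} (hde : d ≤ e) (h : ClosedUnder d t) :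
    ClosedUnder e t := by
  induction t generalizing d e with
  | var n => simp only [ClosedUnder] at *; omega
  | lam t ih => exact ih (Nat.succ_le_succ hde) h
  | app t u iht ihu => exact ⟨iht hde h.1, ihu hde h.2⟩

theorem Closed.closedUnder {t : Lam} (h : t.Closed) (d : ℕ) : ClosedUnder d t :=
  h.mono (Nat.zero_le d)

theorem shift_of_closedUnder {t : Lam} {c : ℕ} (h : ClosedUnder c t) (m : ℕ) :
    shift c m t = t := by
  induction t generalizing c with
  | var n => simp only [ClosedUnder] at h; simp [shift, h]
  | lam t ih => simp [shift, ih h]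
  | app t u iht ihu => simp [shift, iht h.1, ihu h.2]

theorem Closed.shift_eq {t : Lam} (h : t.Closed) (c m : ℕ) : shift c m t = t :=
  shift_of_closedUnder (h.closedUnder c) m

theorem subst_shift_succ (c d : ℕ) (u w : Lam) :
    subst (shift c (d + 1) u) (c + d) w = shift c d u := by
  induction u generalizing c w with
  | var n =>
    by_cases h : n < c
    · simp [shift, subst, h, show n < c + d by omega]
    · simp only [shift, subst, if_neg h, if_neg (show ¬ n + (d + 1) < c + d by omega),
        if_neg (show n + (d + 1) ≠ c + d by omega)]
      rfl
  | lam t ih => simpa [shift, subst, Nat.add_right_comm] using ih (c + 1) (lift 0 w)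
  | app t u iht ihu => simp [shift, subst, iht, ihu]

/-- Simultaneous substitution of the environment `σ` for the variables `d, d+1, …`:
    `σ[0]` replaces the innermost of them, and the variables beyond `σ` move down by
    `σ.length`. A closure is a term `psubst σ 0 (lam b)`. -/
def psubst (σ : List Lam) : ℕ → Lam → Lam
  | d, var n => if n < d then var n
      else shift 0 d (σ.getD (n - d) (var (n - d - σ.length)))
  | d, lam t => lam (psubst σ (d + 1) t)
  | d, app t u => app (psubst σ d t) (psubst σ d u)

theorem psubst_nil (d : ℕ) (t : Lam) : psubst [] d t = t := by
  induction t generalizing d with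
  | var n =>
    by_cases h : n < d
    · simp [psubst, h]
    · simp [psubst, shift, h, Nat.sub_add_cancel (not_lt.1 h)]
  | lam t ih => simp [psubst, ih]
  | app t u iht ihu => simp [psubst, iht, ihu]

theorem psubst_of_closedUnder {t : Lam} {d : ℕ} (h : ClosedUnder d t) (σ : List Lam) :
    psubst σ d t = t := by
  induction t generalizing d with
  | var n => simp only [ClosedUnder] at h; simp [psubst, h]
  | lam t ih => simp [psubst, ih h]
  | app t u iht ihu => simp [psubst, iht h.1, ihu h.2]

@[simp] theorem Closed.psubst_eq {t : Lam} (h : t.Closed) (σ : List Lam) (d : ℕ) :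
    psubst σ d t = t :=
  psubst_of_closedUnder (h.closedUnder d) σ

@[simp] theorem psubst_app (σ : List Lam) (d : ℕ) (t u : Lam) :
    psubst σ d (app t u) = app (psubst σ d t) (psubst σ d u) := rfl

@[simp] theorem psubst_var_zero (σ : List Lam) (n : ℕ) :
    psubst σ 0 (var n) = σ.getD n (var (n - σ.length)) := by
  simp [psubst]

theorem subst_psubst (σ : List Lam) (v b : Lam) (d : ℕ) :
    subst (psubst σ (d + 1) b) d (shift 0 d v) = psubst (v :: σ) d b := by
  induction b generalizing d with
  | var n =>
    rcases Nat.lt_trichotomy n d with h | rfl | h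
    · simp [psubst, subst, h, show n < d + 1 by omega]
    · simp [psubst, subst]
    · obtain ⟨j, rfl⟩ : ∃ j, n = d + 1 + j := ⟨n - (d + 1), by omega⟩
      rw [psubst, if_neg (by omega), psubst, if_neg (by omega),
        show d + 1 + j - d = j + 1 by omega, List.getD_cons_succ,
        show d + 1 + j - (d + 1) = j by omega]
      by_cases hj : j < σ.length
      · rw [List.getD_eq_getElem _ _ hj, List.getD_eq_getElem _ _ hj]
        simpa using subst_shift_succ 0 d σ[j] (shift 0 d v)
      · rw [List.getD_eq_default _ _ (by omega), List.getD_eq_default _ _ (by omega)]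
        simp only [shift, subst, Nat.not_lt_zero, if_false]
        rw [if_neg (by omega), if_neg (by omega), List.length_cons]
        congr 1
        omega
  | lam t ih =>
    simp only [psubst, subst, lift_eq_shift, shift_shift]
    exact congrArg lam (ih (d + 1))
  | app t u iht ihu => simp [psubst, subst, iht, ihu]

@[simp] theorem isValue_var (n : ℕ) : (var n).IsValue := trivial

@[simp] theorem isValue_lam (t : Lam) : (lam t).IsValue := trivial

@[simp] theorem isValue_psubst_lam (σ : List Lam) (d : ℕ) (t : Lam) :
    (psubst σ d (lam t)).IsValue := trivial

theorem IsValue.not_step {v u : Lam} (hv : v.IsValue) : ¬ Step v u := by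
  rintro (_ | _) <;> exact hv

theorem Step.deterministic {t u u' : Lam} (h : Step t u) (h' : Step t u') : u = u' := by
  induction h generalizing u' with
  | beta hv =>
    cases h' with
    | beta => rfl
    | appL _ hs => exact absurd hs (isValue_lam _).not_step
  | appL hv hs ih =>
    cases h' with
    | beta => exact absurd hs (isValue_lam _).not_step
    | appL _ hs' => rw [ih hs']

theorem StepN.trans {a b : ℕ} {t u r : Lam} (h₁ : StepN a t u) (h₂ : StepN b u r) :
    StepN (a + b) t r := by
  induction h₁ with
  | refl => simpa using h₂
  | head s _ ih => rw [Nat.add_right_comm]; exact .head s (ih h₂)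

@[simp] theorem stepN_zero_iff {t r : Lam} : StepN 0 t r ↔ t = r :=
  ⟨fun h => by cases h; rfl, fun h => h ▸ .refl t⟩

/- By determinism every reduction step becomes a rewrite `StepN (m + 1) t r ↔ StepN m u r`;
the `@[simp]` instances below let `simp` run reduction sequences of known length. -/
theorem stepN_succ_iff_of_step {t u r : Lam} {m : ℕ} (h : Step t u) :
    StepN (m + 1) t r ↔ StepN m u r :=
  ⟨fun | .head h' hs => h.deterministic h' ▸ hs, .head h⟩

theorem stepN_add_iff_of_stepN {t u r : Lam} {m n : ℕ} (h : StepN n t u) :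
    StepN (m + n) t r ↔ StepN m u r := by
  induction h with
  | refl => rfl
  | head hs _ ih => rw [← Nat.add_assoc, stepN_succ_iff_of_step hs, ih]

theorem Step.mkApps {t t' : Lam} (h : Step t t') {vs : List Lam} (hvs : ∀ v ∈ vs, v.IsValue) :
    Step (mkApps t vs) (mkApps t' vs) := by
  induction vs generalizing t t' with
  | nil => exact h
  | cons v vs ih =>
    simp only [List.forall_mem_cons] at hvs
    exact ih (.appL hvs.1 h) hvs.2

theorem step_psubst_beta (σ : List Lam) (b : Lam) {v : Lam} (hv : v.IsValue) :
    Step (app (psubst σ 0 (lam b)) v) (psubst (v :: σ) 0 b) := by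
  have h := subst_psubst σ v b 0
  rw [shift_zero] at h
  exact h ▸ Step.beta hv

theorem stepN_psubst_iterLam (b : Lam) {vs : List Lam} (hvs : ∀ v ∈ vs, v.IsValue)
    (σ : List Lam) {rest : List Lam} (hrest : ∀ a ∈ rest, a.IsValue) :
    StepN vs.length (mkApps (psubst σ 0 (iterLam vs.length b)) (vs ++ rest))
      (mkApps (psubst (vs.reverse ++ σ) 0 b) rest) := by
  induction vs generalizing σ with
  | nil => exact .refl _
  | cons v vs ih =>
    simp only [List.forall_mem_cons] at hvs
    have hstep := (step_psubst_beta σ (iterLam vs.length b) hvs.1).mkApps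
      (vs := vs ++ rest) (by simpa [or_imp, forall_and] using ⟨hvs.2, hrest⟩)
    rw [List.reverse_cons, List.append_assoc, List.singleton_append]
    exact .head hstep (ih hvs.2 (v :: σ))

theorem stepN_iterLam_iff (b : Lam) {vs rest : List Lam} {r : Lam} {m : ℕ}
    (hvs : ∀ v ∈ vs, v.IsValue) (hrest : ∀ a ∈ rest, a.IsValue) :
    StepN (m + vs.length) (mkApps (iterLam vs.length b) (vs ++ rest)) r ↔
      StepN m (mkApps (psubst vs.reverse 0 b) rest) r := by
  have h := stepN_psubst_iterLam b hvs [] hrest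
  rw [List.append_nil, psubst_nil] at h
  exact stepN_add_iff_of_stepN h

@[simp] theorem stepN_beta_iff {σ : List Lam} {b v r : Lam} {m : ℕ} (hv : v.IsValue) :
    StepN (m + 1) (app (psubst σ 0 (lam b)) v) r ↔ StepN m (psubst (v :: σ) 0 b) r :=
  stepN_succ_iff_of_step (step_psubst_beta σ b hv)

@[simp] theorem stepN_beta_apps_iff {σ rest : List Lam} {b v r : Lam} {m : ℕ} (hv : v.IsValue)
    (hrest : ∀ a ∈ rest, a.IsValue) :
    StepN (m + 1) (mkApps (psubst σ 0 (lam b)) (v :: rest)) r ↔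
      StepN m (mkApps (psubst (v :: σ) 0 b) rest) r :=
  stepN_succ_iff_of_step ((step_psubst_beta σ b hv).mkApps hrest)

end Lam

open Lam

@[simp] theorem mkApps_nil (t : Lam) : mkApps t [] = t := rfl

@[simp] theorem psubst_mkApps (σ : List Lam) (d : ℕ) (t : Lam) (vs : List Lam) :
    psubst σ d (mkApps t vs) = mkApps (psubst σ d t) (vs.map (psubst σ d)) := by
  induction vs generalizing t with
  | nil => rfl
  | cons v vs ih => exact ih (.app t v)

@[simp] theorem closedUnder_iterLam_iff {b : Lam} {n d : ℕ} :
    ClosedUnder d (iterLam n b) ↔ ClosedUnder (d + n) b := by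
  induction n generalizing d with
  | zero => rfl
  | succ n ih => exact ih.trans (by rw [Nat.add_right_comm]; rfl)

@[simp] theorem closedUnder_mkApps_iff {d : ℕ} {t : Lam} {vs : List Lam} :
    ClosedUnder d (mkApps t vs) ↔ ClosedUnder d t ∧ ∀ v ∈ vs, ClosedUnder d v := by
  induction vs generalizing t with
  | nil => simp
  | cons v vs ih => simp [mkApps, ih, ClosedUnder, and_assoc]

@[simp] theorem inDet_iterLam_iff {b : Lam} {n : ℕ} : (iterLam n b).InDet ↔ b.InDet := by
  induction n with
  | zero => rfl
  | succ n ih => exact ih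

@[simp] theorem inDet_mkApps_iff {t : Lam} {vs : List Lam} :
    (mkApps t vs).InDet ↔ t.InDet ∧ ∀ v ∈ vs, v.InDet ∧ v.IsValue := by
  induction vs generalizing t with
  | nil => simp
  | cons v vs ih => simp [mkApps, ih, InDet, and_assoc]

def idTm : Lam := .lam (.var 0)

@[simp] theorem closed_idTm : idTm.Closed := by simp [idTm, Closed, ClosedUnder]

@[simp] theorem isValue_idTm : idTm.IsValue := trivial

@[simp] theorem closed_encBits (s : List Bool) : (encBits s).Closed := by
  induction s with
  | nil => simp [encBits, Closed, ClosedUnder]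
  | cons b s ih => cases b <;> exact ⟨by simp [ClosedUnder], ih.closedUnder 3⟩

@[simp] theorem isValue_encBits (s : List Bool) : (encBits s).IsValue := by
  rcases s with _ | ⟨_ | _, _⟩ <;> trivial

@[simp] theorem closed_encStr (K : ℕ) (r : List (Fin K)) : (encStr K r).Closed := by
  induction r with
  | nil => simp [encStr, Closed, ClosedUnder]
  | cons a r ih => simp [encStr, Closed, ClosedUnder, ih.closedUnder]

@[simp] theorem isValue_encStr (K : ℕ) (r : List (Fin K)) : (encStr K r).IsValue := by
  cases r <;> trivial

@[simp] theorem closed_encChar {K : ℕ} (a : Fin K) : (encChar K a).Closed :=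
  closedUnder_iterLam_iff.2 (show K - 1 - a < 0 + K by omega)

@[simp] theorem isValue_encChar {K : ℕ} (a : Fin K) : (encChar K a).IsValue := by
  unfold encChar
  cases K <;> trivial

theorem inDet_encChar {K : ℕ} (a : Fin K) : (encChar K a).InDet := by
  simp [encChar, InDet]

/-- `⟨b·t⟩` for a term `t` standing for a bit string. -/
def bitCons (b : Bool) (t : Lam) : Lam :=
  .lam (.lam (.lam (.app (.var (bif b then 1 else 2)) (shift 0 3 t))))

@[simp] theorem bitCons_encBits (b : Bool) (s : List Bool) :
    bitCons b (encBits s) = encBits (b :: s) := by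
  cases b <;> simp [bitCons, encBits, (closed_encBits s).shift_eq]

@[simp] theorem psubst_bitCons_var (σ : List Lam) (b : Bool) (j : ℕ) :
    psubst σ 0 (bitCons b (.var j)) = bitCons b (σ.getD j (.var (j - σ.length))) := by
  cases b <;> simp [bitCons, psubst, shift]

@[simp] theorem stepN_encBits_nil_iff {X Y Z r : Lam} {rest : List Lam} {m : ℕ}
    (hX : X.IsValue) (hY : Y.IsValue) (hZ : Z.IsValue) (hrest : ∀ a ∈ rest, a.IsValue) :
    StepN (m + 3) (mkApps (encBits []) (X :: Y :: Z :: rest)) r ↔ StepN m (mkApps Z rest) r :=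
  (stepN_iterLam_iff (.var 0) (vs := [X, Y, Z]) (by simp [*]) hrest).trans (by simp)

@[simp] theorem stepN_encBits_cons_iff {b : Bool} {s : List Bool} {X Y Z r : Lam}
    {rest : List Lam} {m : ℕ}
    (hX : X.IsValue) (hY : Y.IsValue) (hZ : Z.IsValue) (hrest : ∀ a ∈ rest, a.IsValue) :
    StepN (m + 3) (mkApps (encBits (b :: s)) (X :: Y :: Z :: rest)) r ↔
      StepN m (mkApps (bif b then Y else X) (encBits s :: rest)) r := by
  cases b <;> exact (stepN_iterLam_iff (.app (.var _) (encBits s)) (vs := [X, Y, Z])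
    (by simp [*]) hrest).trans (by simp [mkApps])

@[simp] theorem stepN_encStr_cons_iff {K : ℕ} {a : Fin K} {s : List (Fin K)} {f : Fin K → Lam}
    {Z R : Lam} {m : ℕ} (hf : ∀ j, (f j).IsValue) (hZ : Z.IsValue) :
    StepN (K + m + 1) (mkApps (encStr K (a :: s)) (List.ofFn f ++ [Z])) R ↔
      StepN m (.app (f a) (encStr K s)) R := by
  have hvs : ∀ v ∈ List.ofFn f ++ [Z], v.IsValue := by
    simp only [List.mem_append, List.mem_ofFn, List.mem_singleton]
    rintro v (⟨j, rfl⟩ | rfl) <;> simp [hf, hZ]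
  have h := stepN_iterLam_iff (.app (.var (K - a)) (encStr K s)) hvs (rest := []) (r := R) (m := m)
    (by simp)
  rw [show (List.ofFn f ++ [Z]).length = K + 1 by simp, List.append_nil] at h
  rw [show K + m + 1 = m + (K + 1) by ring]
  refine h.trans ?_
  have hlookup : (Z :: (List.ofFn f).reverse)[K - a]'(by simp) = f a := by
    obtain ⟨j, hj⟩ : ∃ j, K - a = j + 1 := ⟨K - a - 1, by omega⟩
    simp only [hj, List.getElem_cons_succ, List.getElem_reverse, List.getElem_ofFn]
    congr 2
    simp
    omega
  simp [hlookup]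

/-- `λp b k. b (λt. p p t (λr. k ⟨1·r⟩)) (λt. t (λ_ _. k ⟨0·t⟩) (λ_ _. k ⟨0·t⟩) (λ_. k ⟨ε⟩) id) id`.
    A Scott case split `b X Y Z` returns its `ε`-branch `Z` unevaluated, so every branch takes
    a dummy argument and the split is followed by `id`. -/
def predBody : Lam :=
  mkApps (.var 1)
    [.lam (mkApps (.var 3) [.var 3, .var 0, .lam (.app (.var 2) (bitCons true (.var 0)))]),
     .lam (mkApps (.var 0)
       [.lam (.lam (.app (.var 3) (bitCons false (.var 2)))),
        .lam (.lam (.app (.var 3) (bitCons false (.var 2)))),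
        .lam (.app (.var 2) (encBits [])), idTm]),
     idTm]

def predTm : Lam := iterLam 3 predBody

@[simp] theorem closed_predTm : predTm.Closed := by
  simp [predTm, predBody, bitCons, shift, encBits, idTm, Closed, ClosedUnder]

@[simp] theorem isValue_predTm : predTm.IsValue := trivial

theorem inDet_predTm : predTm.InDet := by
  simp [predTm, predBody, bitCons, shift, encBits, idTm, InDet]

@[simp] theorem stepN_predTm_iff {p b k r : Lam} {m : ℕ} (hp : p.IsValue) (hb : b.IsValue)
    (hk : k.IsValue) :
    StepN (m + 3) (mkApps predTm [p, b, k]) r ↔ StepN m (psubst [k, b, p] 0 predBody) r :=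
  (stepN_iterLam_iff predBody (vs := [p, b, k]) (rest := []) (by simp [*]) (by simp)).trans
    (by simp)

theorem predTm_one {k : Lam} (hk : k.IsValue) :
    StepN 11 (mkApps predTm [predTm, encBits [true], k]) (.app k (encBits [])) := by
  simp [hk, predBody]

theorem predTm_true_cons {k : Lam} (hk : k.IsValue) (b : Bool) (s : List Bool) :
    StepN 12 (mkApps predTm [predTm, encBits (true :: b :: s), k])
      (.app k (encBits (false :: b :: s))) := by
  simp [hk, predBody]

theorem predTm_false_cons {k : Lam} (hk : k.IsValue) (s : List Bool) :
    ∃ C : Lam, C.IsValue ∧ (∀ r, StepN 1 (.app C (encBits r)) (.app k (encBits (true :: r)))) ∧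
      StepN 7 (mkApps predTm [predTm, encBits (false :: s), k])
        (mkApps predTm [predTm, encBits s, C]) :=
  ⟨psubst [encBits s, k, encBits (false :: s), predTm] 0
      (.lam (.app (.var 2) (bitCons true (.var 0)))),
    by simp, fun r => by simp, by simp [hk, predBody]⟩

theorem bits_ne_nil {n : ℕ} (hn : n ≠ 0) : n.bits ≠ [] :=
  List.ne_nil_of_length_pos (by rw [Nat.size_eq_bits_len]; exact Nat.size_pos.2 (by omega))

theorem predTm_spec {n : ℕ} (hn : 0 < n) {k : Lam} (hk : k.IsValue) :
    ∃ m ≤ 12 * (Nat.log 2 n + 1),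
      StepN m (mkApps predTm [predTm, encBits n.bits, k]) (.app k (encBits (n - 1).bits)) := by
  induction n using Nat.strong_induction_on generalizing k with
  | _ n ih =>
  obtain ⟨q, rfl | rfl⟩ := n.even_or_odd'
  · have hq : q ≠ 0 := by omega
    obtain ⟨C, hC, hCk, hsteps⟩ := predTm_false_cons hk q.bits
    obtain ⟨m, hm, hrec⟩ := ih q (by omega) (by omega) hC
    have hlog : Nat.log 2 (2 * q) = Nat.log 2 q + 1 := by
      rw [mul_comm]; exact Nat.log_mul_base one_lt_two hq
    rw [Nat.bit0_bits q hq, show 2 * q - 1 = 2 * (q - 1) + 1 by omega, Nat.bit1_bits]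
    exact ⟨7 + m + 1, by omega, (hsteps.trans hrec).trans (hCk _)⟩
  · rw [Nat.bit1_bits, Nat.add_sub_cancel]
    rcases Nat.eq_zero_or_pos q with rfl | hq
    · exact ⟨11, by simp, predTm_one hk⟩
    · obtain ⟨b, s, hbs⟩ := List.exists_cons_of_ne_nil (bits_ne_nil hq.ne')
      rw [Nat.bit0_bits q hq.ne', hbs]
      exact ⟨12, by omega, predTm_true_cons hk b s⟩

def lookupNext : Lam :=
  .lam (.lam (mkApps predTm
    [predTm, .var 4, .lam (mkApps (.var 7) [.var 7, .var 6, .var 0, .var 3])]))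

/-- `λl k b s. s B_1 … B_K id` with `B_j = λr. b N N (λ_. k ⟨a_j⟩) id` and
    `N = lookupNext = λ_ _. predTm predTm b (λp. l l k p r)`. -/
def lookupBody (K : ℕ) : Lam :=
  mkApps (.var 0) (List.ofFn (fun j : Fin K =>
    .lam (mkApps (.var 2) [lookupNext, lookupNext, .lam (.app (.var 4) (encChar K j)), idTm]))
    ++ [idTm])

def lookupRecTm (K : ℕ) : Lam := iterLam 4 (lookupBody K)

theorem closed_lookupRecTm (K : ℕ) : (lookupRecTm K).Closed := by
  simp [Closed, lookupRecTm, lookupBody, lookupNext, ClosedUnder, closed_predTm.closedUnder,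
    (closed_encChar _).closedUnder, closed_idTm.closedUnder, or_imp, forall_and,
    forall_exists_index, forall_apply_eq_imp_iff]

@[simp] theorem isValue_lookupRecTm (K : ℕ) : (lookupRecTm K).IsValue := trivial

theorem inDet_lookupRecTm (K : ℕ) : (lookupRecTm K).InDet := by
  simp [lookupRecTm, lookupBody, lookupNext, InDet, inDet_predTm, inDet_encChar, idTm, or_imp,
    forall_and, forall_exists_index, forall_apply_eq_imp_iff]

@[simp] theorem stepN_lookupRecTm_iff {K : ℕ} {l k b s r : Lam} {m : ℕ} (hl : l.IsValue)
    (hk : k.IsValue) (hb : b.IsValue) (hs : s.IsValue) :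
    StepN (m + 4) (mkApps (lookupRecTm K) [l, k, b, s]) r ↔
      StepN m (psubst [s, b, k, l] 0 (lookupBody K)) r :=
  (stepN_iterLam_iff (lookupBody K) (vs := [l, k, b, s]) (rest := []) (by simp [*])
    (by simp)).trans (by simp)

theorem lookupRecTm_encBits_nil {K : ℕ} {k : Lam} (hk : k.IsValue) (a : Fin K) (s : List (Fin K)) :
    StepN (K + 10) (mkApps (lookupRecTm K) [lookupRecTm K, k, encBits [], encStr K (a :: s)])
      (.app k (encChar K a)) := by
  simp [hk, lookupBody, lookupNext]

theorem lookupRecTm_encBits_cons {K : ℕ} {k : Lam} (hk : k.IsValue) (b : Bool) (t : List Bool)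
    (a : Fin K) (s : List (Fin K)) :
    ∃ C : Lam, C.IsValue ∧
      (∀ p, p.IsValue →
        StepN 1 (.app C p) (mkApps (lookupRecTm K) [lookupRecTm K, k, p, encStr K s])) ∧
      StepN (K + 11)
        (mkApps (lookupRecTm K) [lookupRecTm K, k, encBits (b :: t), encStr K (a :: s)])
        (mkApps predTm [predTm, encBits (b :: t), C]) :=
  ⟨psubst [idTm, encBits t, encStr K s, encStr K (a :: s), encBits (b :: t), k, lookupRecTm K] 0
      (.lam (mkApps (.var 7) [.var 7, .var 6, .var 0, .var 3])),
    by simp, fun p hp => by simp [hp], by simp [hk, lookupBody, lookupNext]⟩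

theorem lookupRecTm_spec {K : ℕ} {k : Lam} (hk : k.IsValue) (n : ℕ) (i : List (Fin K))
    (h : n < i.length) :
    ∃ m ≤ (K + 24) * (n + 1) * (Nat.log 2 (n + 1) + 1),
      StepN m (mkApps (lookupRecTm K) [lookupRecTm K, k, encBits n.bits, encStr K i])
        (.app k (encChar K (i.get ⟨n, h⟩))) := by
  induction n generalizing i with
  | zero =>
    obtain ⟨a, s, rfl⟩ := List.exists_cons_of_length_pos h
    exact ⟨K + 10, by simp, lookupRecTm_encBits_nil hk a s⟩
  | succ n ih =>
    obtain ⟨a, s, rfl⟩ := List.exists_cons_of_length_pos (n.zero_lt_succ.trans h)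
    obtain ⟨b, t, hbt⟩ := List.exists_cons_of_ne_nil (bits_ne_nil n.succ_ne_zero)
    obtain ⟨C, hC, hCk, hsteps⟩ := lookupRecTm_encBits_cons hk b t a s
    obtain ⟨mp, hmp, hpred⟩ := predTm_spec (by omega : 0 < n + 1) hC
    obtain ⟨m, hm, hrec⟩ := ih s (by simpa using h)
    rw [hbt, Nat.add_sub_cancel] at hpred
    rw [hbt]
    refine ⟨K + 11 + mp + 1 + m, ?_,
      ((hsteps.trans hpred).trans (hCk _ (isValue_encBits _))).trans hrec⟩
    set A := Nat.log 2 (n + 1) + 1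
    have hA : 1 ≤ A := Nat.le_add_left 1 _
    have hAB : A ≤ Nat.log 2 (n + 1 + 1) + 1 :=
      Nat.add_le_add_right (Nat.log_mono_right (by omega)) 1
    calc K + 11 + mp + 1 + m ≤ (K + 12) * A + 12 * A + (K + 24) * (n + 1) * A := by nlinarith
      _ = (K + 24) * (n + 1 + 1) * A := by ring
      _ ≤ (K + 24) * (n + 1 + 1) * (Nat.log 2 (n + 1 + 1) + 1) := by gcongr

/-- for every finite alphabet (of size `K`) there is a closed λ-term
    `lookup_λ` of `Λ_det` and a constant `c` such that for every value `k`, every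
    `n`, and every (nonempty) string `i` with `n < |i|`,
    `lookup_λ k ⟨n̂⟩ ⟨i⟩ →det^m k ⟨a⟩` where `a` is the `(n+1)`-th character of `i`
    and `m ≤ c·(n+1)·(log₂(n+1)+1)`. -/
theorem lookup_term_correct (K : ℕ) :
    ∃ (lookupTm : Lam) (c : ℕ), lookupTm.Closed ∧ lookupTm.InDet ∧
      ∀ kont : Lam, kont.IsValue → kont.InDet →
        ∀ (n : ℕ) (i : List (Fin K)) (h : n < i.length),
          ∃ m : ℕ, m ≤ c * (n + 1) * (Nat.log 2 (n + 1) + 1) ∧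
            Lam.StepN m
              (.app (.app (.app lookupTm kont) (encBits (Nat.bits n))) (encStr K i))
              (.app kont (encChar K (i.get ⟨n, h⟩))) :=
  ⟨.app (lookupRecTm K) (lookupRecTm K), K + 24,
    ⟨closed_lookupRecTm K, closed_lookupRecTm K⟩,
    ⟨inDet_lookupRecTm K, inDet_lookupRecTm K, trivial⟩,
    fun _ hk _ n i h => lookupRecTm_spec hk n i h⟩

end LogTM
end

section
/- Composition of pred and lookup: for every natural number n > 0 and every nonempty string c·s, lookup n̂ (c·s) = lookup ((n−1)̂) s; consequently, for every string s and every n < |s|, lookup n̂ s equals lookup 0̂ applied to the suffix of s starting at position n, namely the character of s at position n. -/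
namespace LogTM

/-!
Reversed binary `rpred` is the predecessor on `Nat.bits`: on `2m + 1` it clears the low bit,
and on `2m` it turns the low `0` into `1` and recurses on `m`. Hence each step of `rlookup`
drops one character and decrements the counter, so `rlookup n̂ s` reads `s[n]?`.
-/

lemma bits_succ_ne_nil (n : ℕ) : (n + 1).bits ≠ [] := by
  rw [← List.length_pos_iff, Nat.size_eq_bits_len, Nat.size_pos]
  exact n.succ_pos

lemma rpred_bits_succ (n : ℕ) : rpred (n + 1).bits = n.bits := by
  induction n using Nat.strong_induction_on with
  | _ n ih =>
  obtain ⟨m, rfl | rfl⟩ := Nat.even_or_odd' n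
  · rcases m with _ | m
    · simp [rpred]
    · obtain ⟨b, t, hbits⟩ := List.exists_cons_of_ne_nil (bits_succ_ne_nil m)
      rw [Nat.bit1_bits, hbits, rpred, ← hbits, Nat.bit0_bits _ m.succ_ne_zero]
  · rw [show 2 * m + 1 + 1 = 2 * (m + 1) by ring, Nat.bit0_bits _ m.succ_ne_zero, rpred,
      ih m (by omega), Nat.bit1_bits]

lemma rlookup_bits_succ_cons {α : Type*} (n : ℕ) (c : α) (s : List α) :
    rlookup (n + 1).bits (c :: s) = rlookup n.bits s := by
  obtain ⟨b, t, hbits⟩ := List.exists_cons_of_ne_nil (bits_succ_ne_nil n)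
  rw [hbits, rlookup, ← hbits, rpred_bits_succ]

lemma rlookup_nil {α : Type*} (s : List α) : rlookup [] s = s.head? := by
  cases s <;> rfl

lemma rlookup_bits {α : Type*} (n : ℕ) (s : List α) : rlookup n.bits s = s[n]? := by
  induction s generalizing n with
  | nil => cases n.bits <;> rfl
  | cons c s ih =>
    rcases n with _ | n
    · rfl
    · rw [rlookup_bits_succ_cons, ih, List.getElem?_cons_succ]

/-- composition of pred and lookup: for every `n > 0` and nonempty
    string `c·s`, `lookup n̂ (c·s) = lookup (n−1)̂ s`; consequently, for every `s`
    and `n < |s|`, `lookup n̂ s = lookup 0̂ (drop n s)`, the character of `s` at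
    position `n`. -/
theorem lookup_pred :
    (∀ n : ℕ, 0 < n → ∀ (α : Type*) (c : α) (s : List α),
        rlookup (Nat.bits n) (c :: s) = rlookup (Nat.bits (n - 1)) s) ∧
    (∀ (α : Type*) (s : List α) (n : ℕ), n < s.length →
        rlookup (Nat.bits n) s = rlookup (Nat.bits 0) (s.drop n)) := by
  refine ⟨fun n hn α c s => ?_, fun α s n _ => ?_⟩
  · obtain ⟨m, rfl⟩ := Nat.exists_eq_add_of_lt hn
    simpa using rlookup_bits_succ_cons m c s
  · rw [rlookup_bits, Nat.zero_bits, rlookup_nil, List.head?_drop]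

end LogTM
end
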